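/- Let f : ℂ → ℂ be continuous on the closed disk {z : |z| ≤ R} and suppose: (1) for all z with r < |z| < R, either |f(z)| ≤ g(|z|) or |f(z)| ≥ h(|z|), where g, h : (r,R) → ℝ are continuous with g(u) < h(u) for all u ∈ (r,R); (2) for real u ∈ (r,R), f(u) is real with |f(u)| ≤ g(u). Then |f(z)| ≤ g(|z|) for all z with r < |z| < R. -/

import Mathlib

/-!
On the circle `‖w‖ = ‖z‖` the thresholds `g ‖z‖ < h ‖z‖` are constants, and `‖f‖` is
continuous there and never takes a value strictly between them. The circle is connected and
passes through the positive real point `‖z‖`, where `‖f‖ ≤ g`, so by the intermediate value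
theorem `‖f‖` stays below the lower threshold on the whole circle.
-/

open Metric

theorem IsPreconnected.forall_le_of_le_or_le {X α : Type*} [TopologicalSpace X]
    [LinearOrder α] [TopologicalSpace α] [OrderClosedTopology α] [DenselyOrdered α] {S : Set X}
    (hS : IsPreconnected S) {φ : X → α} (hφ : ContinuousOn φ S) {a b : α} (hab : a < b)
    (hgap : ∀ x ∈ S, φ x ≤ a ∨ b ≤ φ x) {x₀ : X} (hx₀ : x₀ ∈ S) (h₀ : φ x₀ ≤ a) :
    ∀ x ∈ S, φ x ≤ a := by
  intro x hx
  by_contra hxa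
  have hbx : b ≤ φ x := (hgap x hx).resolve_left hxa
  obtain ⟨c, hac, hcb⟩ := exists_between hab
  obtain ⟨y, hy, hyc⟩ :=
    hS.intermediate_value hx₀ hx hφ ⟨h₀.trans hac.le, hcb.le.trans hbx⟩
  rcases hgap y hy with hya | hby
  · exact (hyc ▸ hya).not_gt hac
  · exact (hyc ▸ hby).not_gt hcb

theorem Complex.isPreconnected_sphere (x : ℂ) (r : ℝ) : IsPreconnected (sphere x r) :=
  _root_.isPreconnected_sphere (by rw [Complex.rank_real_complex]; norm_num) x r

theorem stmt_10_general (f : ℂ → ℂ) (r R : ℝ)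
    (hf : ContinuousOn f {z : ℂ | ‖z‖ ≤ R})
    (g h : ℝ → ℝ)
    (hgh : ∀ u ∈ Set.Ioo r R, g u < h u)
    (hdich : ∀ z : ℂ, r < ‖z‖ → ‖z‖ < R →
      ‖f z‖ ≤ g (‖z‖) ∨ h (‖z‖) ≤ ‖f z‖)
    (hreal : ∀ u ∈ Set.Ioo r R, (f (u : ℂ)).im = 0 ∧ ‖f (u : ℂ)‖ ≤ g u) :
    ∀ z : ℂ, r < ‖z‖ → ‖z‖ < R →
      ‖f z‖ ≤ g (‖z‖) := by
  intro z hrz hzR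
  set u := ‖z‖
  have hu : u ∈ Set.Ioo r R := ⟨hrz, hzR⟩
  have hcircle : ∀ w ∈ sphere (0 : ℂ) u, ‖w‖ = u := fun w => mem_sphere_zero_iff_norm.mp
  have hcont : ContinuousOn (fun w => ‖f w‖) (sphere (0 : ℂ) u) :=
    (hf.mono fun w hw => (hcircle w hw).trans_le hzR.le).norm
  have hgap : ∀ w ∈ sphere (0 : ℂ) u, ‖f w‖ ≤ g u ∨ h u ≤ ‖f w‖ := fun w hw => by
    rw [← hcircle w hw] at hu ⊢
    exact hdich w hu.1 hu.2
  have hu_mem : (u : ℂ) ∈ sphere (0 : ℂ) u := by simp [u]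
  have hz_mem : z ∈ sphere (0 : ℂ) u := by simp [u]
  exact (Complex.isPreconnected_sphere 0 u).forall_le_of_le_or_le hcont (hgh u hu) hgap
    hu_mem (hreal u hu).2 z hz_mem

/-- Connectedness/continuity argument of Lemma 3.6(b): the lower alternative of the
dichotomy holds throughout the annulus. -/
theorem stmt_10 (f : ℂ → ℂ) (r R : ℝ) (hr : 0 ≤ r) (hrR : r < R)
    (hf : ContinuousOn f {z : ℂ | ‖z‖ ≤ R})
    (g h : ℝ → ℝ)
    (hg : ContinuousOn g (Set.Ioo r R)) (hh : ContinuousOn h (Set.Ioo r R))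
    (hgh : ∀ u ∈ Set.Ioo r R, g u < h u)
    (hdich : ∀ z : ℂ, r < ‖z‖ → ‖z‖ < R →
      ‖f z‖ ≤ g (‖z‖) ∨ h (‖z‖) ≤ ‖f z‖)
    (hreal : ∀ u ∈ Set.Ioo r R, (f (u : ℂ)).im = 0 ∧ ‖f (u : ℂ)‖ ≤ g u) :
    ∀ z : ℂ, r < ‖z‖ → ‖z‖ < R →
      ‖f z‖ ≤ g (‖z‖) :=
  stmt_10_general f r R hf g h hgh hdich hreal
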